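/- Let e = uv be an edge of G, and set J = (uv) and K = I(G∖e). Let A = N(u)∖{v}, B = N(v)∖{u}, and H = G∖(N(u)∪N(v)). Then the minimal monomial generating set of J ∩ K is G(J ∩ K) = {uvw : w ∈ A∖B} ∪ {uvw : w ∈ B∖A} ∪ {uvw : w ∈ A∩B} ∪ {uv·m : m ∈ G(I(H))}, where G(I(H)) is the set of monomials x_i x_j over the edges {x_i,x_j} of H. -/

import Mathlib

open MvPolynomial

variable {V : Type*}

/-- The graph obtained from `G` by deleting the vertices in `S`
(and all edges incident to them). -/
def delVerts (G : SimpleGraph V) (S : Set V) : SimpleGraph V where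
  Adj x y := G.Adj x y ∧ x ∉ S ∧ y ∉ S
  symm := ⟨fun _ _ h => ⟨h.1.symm, h.2.2, h.2.1⟩⟩
  loopless := ⟨fun _ h => G.ne_of_adj h.1 rfl⟩

/-- The edge ideal of a simple graph `G`. -/
noncomputable def edgeIdeal (k : Type*) [Field k] (G : SimpleGraph V) :
    Ideal (MvPolynomial V k) :=
  Ideal.span {m | ∃ x y, G.Adj x y ∧ m = X x * X y}

/-- A (monic) monomial in a multivariate polynomial ring. -/
def IsMonomial {k : Type*} [Field k] (m : MvPolynomial V k) : Prop :=
  ∃ s : V →₀ ℕ, m = monomial s 1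

/-- The set of minimal (monic) monomial generators of a monomial ideal `I`:
monomials `m ∈ I` such that no proper monomial divisor of `m` lies in `I`. -/
def minGens {k : Type*} [Field k] (I : Ideal (MvPolynomial V k)) :
    Set (MvPolynomial V k) :=
  {m | IsMonomial m ∧ m ∈ I ∧
    ∀ m' : MvPolynomial V k, IsMonomial m' → m' ∣ m → m' ≠ m → m' ∉ I}

/-!
A monomial lies in `(uv) ∩ I(G ∖ uv)` iff its support contains `u`, `v` and both ends of an
edge other than `uv`; membership thus depends only on the support, so the minimal generators
are the squarefree monomials on the inclusion-minimal such vertex sets. A minimal set is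
`{u, v, w}` as soon as it contains a neighbour `w ∉ {u, v}` of `u` or `v`; otherwise its
extra edge `xy` avoids `N(u) ∪ N(v)` and the set is `{u, v, x, y}`.
-/

theorem delVerts_adj {G : SimpleGraph V} {S : Set V} {x y : V} :
    (delVerts G S).Adj x y ↔ G.Adj x y ∧ x ∉ S ∧ y ∉ S :=
  Iff.rfl

namespace Finsupp

theorem single_one_add_single_one_le_iff {x y : V} (hxy : x ≠ y) {s : V →₀ ℕ} :
    single x 1 + single y 1 ≤ s ↔ x ∈ s.support ∧ y ∈ s.support := by
  classical
  simp only [le_def, mem_support_iff, coe_add, Pi.add_apply, single_apply]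
  refine ⟨fun h => ⟨?_, ?_⟩, fun h a => ?_⟩
  · simpa [hxy.symm, Nat.one_le_iff_ne_zero] using h x
  · simpa [hxy, Nat.one_le_iff_ne_zero] using h y
  · by_cases hx : x = a <;> by_cases hy : y = a <;> simp_all [Nat.one_le_iff_ne_zero]

variable [DecidableEq V]

theorem sum_single_one_apply (S : Finset V) (a : V) :
    (∑ x ∈ S, single x 1 : V →₀ ℕ) a = if a ∈ S then 1 else 0 := by
  simp [finsetSum_apply, single_apply]

theorem support_sum_single_one (S : Finset V) :
    (∑ x ∈ S, single x 1 : V →₀ ℕ).support = S := by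
  ext a
  simp [sum_single_one_apply]

theorem sum_single_one_support_le (s : V →₀ ℕ) : ∑ x ∈ s.support, single x 1 ≤ s := fun a => by
  rw [sum_single_one_apply]
  split_ifs with ha
  · exact Nat.one_le_iff_ne_zero.2 (mem_support_iff.1 ha)
  · exact Nat.zero_le _

end Finsupp

namespace MvPolynomial

open Finsupp (single)

variable {k : Type*} [Field k]

theorem monomial_mem_span_X_mul_X_iff {u v : V} (huv : u ≠ v) (s : V →₀ ℕ) :
    monomial s (1 : k) ∈ Ideal.span {X u * X v} ↔ u ∈ s.support ∧ v ∈ s.support := by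
  rw [Ideal.mem_span_singleton, X, X, monomial_mul, one_mul, monomial_one_dvd_monomial_one,
    Finsupp.single_one_add_single_one_le_iff huv]

theorem monomial_mem_edgeIdeal_iff (G : SimpleGraph V) (s : V →₀ ℕ) :
    monomial s (1 : k) ∈ edgeIdeal k G ↔ ∃ x ∈ s.support, ∃ y ∈ s.support, G.Adj x y := by
  classical
  have hgens : {m | ∃ x y, G.Adj x y ∧ m = (X x * X y : MvPolynomial V k)} =
      (fun t => monomial t 1) '' {t | ∃ x y, G.Adj x y ∧ t = single x 1 + single y 1} := by
    ext m
    simp [X, monomial_mul, eq_comm]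
  rw [edgeIdeal, hgens, mem_ideal_span_monomial_image, support_monomial, if_neg one_ne_zero]
  simp only [Finset.mem_singleton, forall_eq, Set.mem_ofPred_eq]
  constructor
  · rintro ⟨_, ⟨x, y, hxy, rfl⟩, hle⟩
    obtain ⟨hx, hy⟩ := (Finsupp.single_one_add_single_one_le_iff hxy.ne).1 hle
    exact ⟨x, hx, y, hy, hxy⟩
  · rintro ⟨x, hx, y, hy, hxy⟩
    exact ⟨_, ⟨x, y, hxy, rfl⟩, (Finsupp.single_one_add_single_one_le_iff hxy.ne).2 ⟨hx, hy⟩⟩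

theorem monomial_mem_minGens_iff {I : Ideal (MvPolynomial V k)} {s : V →₀ ℕ} :
    monomial s 1 ∈ minGens I ↔ monomial s 1 ∈ I ∧ ∀ r ≤ s, monomial r 1 ∈ I → r = s := by
  refine ⟨fun ⟨_, hsI, h⟩ => ⟨hsI, fun r hrs hr => ?_⟩, fun ⟨hsI, h⟩ => ⟨⟨s, rfl⟩, hsI, ?_⟩⟩
  · by_contra hne
    exact h _ ⟨r, rfl⟩ (monomial_one_dvd_monomial_one.2 hrs)
      (fun h' => hne (monomial_left_injective one_ne_zero h')) hr
  · rintro _ ⟨r, rfl⟩ hdvd hne hr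
    exact hne (by rw [h r (monomial_one_dvd_monomial_one.1 hdvd) hr])

theorem prod_X_eq_monomial (S : Finset V) :
    ∏ x ∈ S, (X x : MvPolynomial V k) = monomial (∑ x ∈ S, single x 1) 1 :=
  (monomial_sum_one S _).symm

variable [DecidableEq V]

theorem prod_X_insert_insert_singleton {a b c : V} (hab : a ≠ b) (hac : a ≠ c) (hbc : b ≠ c) :
    ∏ x ∈ {a, b, c}, (X x : MvPolynomial V k) = X a * X b * X c := by
  simp [Finset.prod_insert, hab, hac, hbc, mul_assoc]

theorem prod_X_insert_insert_pair {a b c d : V} (hab : a ≠ b) (hac : a ≠ c) (had : a ≠ d)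
    (hbc : b ≠ c) (hbd : b ≠ d) (hcd : c ≠ d) :
    ∏ x ∈ {a, b, c, d}, (X x : MvPolynomial V k) = X a * X b * (X c * X d) := by
  simp [Finset.prod_insert, hab, hac, had, hbc, hbd, hcd, mul_assoc]

theorem minGens_eq_image_prod_X {I : Ideal (MvPolynomial V k)} {P : Finset V → Prop}
    (hI : ∀ s : V →₀ ℕ, monomial s 1 ∈ I ↔ P s.support) :
    minGens I = (fun S => ∏ x ∈ S, X x) '' {S | Minimal P S} := by
  ext m
  simp only [Set.mem_image, Set.mem_ofPred_eq, prod_X_eq_monomial]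
  constructor
  · intro hm
    obtain ⟨s, rfl⟩ := hm.1
    obtain ⟨hsI, hmin⟩ := monomial_mem_minGens_iff.1 hm
    have hsq : ∑ x ∈ s.support, single x 1 = s :=
      hmin _ (Finsupp.sum_single_one_support_le s)
        ((hI _).2 (by rwa [Finsupp.support_sum_single_one, ← hI]))
    refine ⟨s.support, ⟨(hI s).1 hsI, fun T hT hTs => ?_⟩, by rw [hsq]⟩
    have hTs' : ∑ x ∈ T, single x 1 ≤ s :=
      (Finset.sum_le_sum_of_subset hTs).trans (Finsupp.sum_single_one_support_le s)
    rw [← hmin _ hTs' ((hI _).2 (by rwa [Finsupp.support_sum_single_one])),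
      Finsupp.support_sum_single_one]
  · rintro ⟨S, hS, rfl⟩
    have hSI := (hI (∑ x ∈ S, single x 1)).2 (by rw [Finsupp.support_sum_single_one]; exact hS.prop)
    refine monomial_mem_minGens_iff.2 ⟨hSI, fun r hr hrI => ?_⟩
    have hsupp : r.support = S := (hS.eq_of_ge ((hI r).1 hrI)
      (Finsupp.support_sum_single_one S ▸ Finsupp.support_mono hr)).symm
    exact le_antisymm hr (hsupp ▸ Finsupp.sum_single_one_support_le r)

end MvPolynomial

namespace SimpleGraph

variable {G : SimpleGraph V} {u v : V}

theorem mem_neighborSet_diff_of_deleteEdges_adj {a b : V}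
    (h : (G.deleteEdges {s(u, v)}).Adj a b) (ha : a = u ∨ a = v) :
    b ∈ G.neighborSet u \ {v} ∪ G.neighborSet v \ {u} := by
  rw [deleteEdges_adj, Set.mem_singleton_iff] at h
  rcases ha with rfl | rfl
  · exact Or.inl ⟨h.1, fun hb => h.2 (by rw [Set.mem_singleton_iff.1 hb])⟩
  · exact Or.inr ⟨h.1, fun hb => h.2 (by rw [Set.mem_singleton_iff.1 hb, Sym2.eq_swap])⟩

theorem exists_deleteEdges_adj_of_mem_neighborSet_diff {w : V}
    (hw : w ∈ G.neighborSet u \ {v} ∪ G.neighborSet v \ {u}) :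
    ∃ a, (a = u ∨ a = v) ∧ (G.deleteEdges {s(u, v)}).Adj a w := by
  rcases hw with ⟨hw, hwv⟩ | ⟨hw, hwu⟩
  · exact ⟨u, Or.inl rfl, deleteEdges_adj.2 ⟨hw, by simp_all⟩⟩
  · exact ⟨v, Or.inr rfl, deleteEdges_adj.2 ⟨hw, by simp_all⟩⟩

theorem ne_of_mem_neighborSet_diff {w : V}
    (hw : w ∈ G.neighborSet u \ {v} ∪ G.neighborSet v \ {u}) : w ≠ u ∧ w ≠ v := by
  rcases hw with ⟨hw, hwv⟩ | ⟨hw, hwu⟩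
  · exact ⟨(G.ne_of_adj hw).symm, hwv⟩
  · exact ⟨hwu, (G.ne_of_adj hw).symm⟩

theorem ne_of_delVerts_adj (huv : G.Adj u v) {x y : V}
    (hxy : (delVerts G (G.neighborSet u ∪ G.neighborSet v)).Adj x y) : x ≠ u ∧ x ≠ v := by
  obtain ⟨-, hx, -⟩ := delVerts_adj.1 hxy
  exact ⟨by rintro rfl; exact hx (Or.inr huv.symm), by rintro rfl; exact hx (Or.inl huv)⟩

def ContainsTwoEdges (G : SimpleGraph V) (u v : V) (S : Finset V) : Prop :=
  (u ∈ S ∧ v ∈ S) ∧ ∃ x ∈ S, ∃ y ∈ S, (G.deleteEdges {s(u, v)}).Adj x y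

theorem monomial_mem_inf_iff_containsTwoEdges {k : Type*} [Field k] (huv : u ≠ v)
    (s : V →₀ ℕ) :
    monomial s (1 : k) ∈ Ideal.span {X u * X v} ⊓ edgeIdeal k (G.deleteEdges {s(u, v)}) ↔
      G.ContainsTwoEdges u v s.support := by
  rw [Submodule.mem_inf, monomial_mem_span_X_mul_X_iff huv, monomial_mem_edgeIdeal_iff]
  rfl

variable [DecidableEq V]

theorem minimal_containsTwoEdges_insert_insert_singleton
    {w : V} (hw : w ∈ G.neighborSet u \ {v} ∪ G.neighborSet v \ {u}) :
    Minimal (G.ContainsTwoEdges u v) {u, v, w} := by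
  obtain ⟨a, ha, haw⟩ := exists_deleteEdges_adj_of_mem_neighborSet_diff hw
  refine ⟨⟨by simp, a, by rcases ha with rfl | rfl <;> simp, w, by simp, haw⟩, ?_⟩
  rintro T ⟨⟨huT, hvT⟩, b, hbT, c, hcT, hbc⟩ hT
  suffices w ∈ T by simp [Finset.insert_subset_iff, huT, hvT, this]
  have hb := hT hbT
  have hc := hT hcT
  simp only [Finset.mem_insert, Finset.mem_singleton] at hb hc
  by_cases hbuv : b = u ∨ b = v
  · obtain ⟨hcu, hcv⟩ :=
      ne_of_mem_neighborSet_diff (mem_neighborSet_diff_of_deleteEdges_adj hbc hbuv)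
    obtain rfl : c = w := by tauto
    exact hcT
  · obtain rfl : b = w := by tauto
    exact hbT

theorem minimal_containsTwoEdges_insert_insert_pair (huv : G.Adj u v) {x y : V}
    (hxy : (delVerts G (G.neighborSet u ∪ G.neighborSet v)).Adj x y) :
    Minimal (G.ContainsTwoEdges u v) {u, v, x, y} := by
  obtain ⟨hxu, hxv⟩ := ne_of_delVerts_adj huv hxy
  obtain ⟨hxy, hx, hy⟩ := delVerts_adj.1 hxy
  have hdel : (G.deleteEdges {s(u, v)}).Adj x y :=
    deleteEdges_adj.2 ⟨hxy, by simp [hxu, hxv]⟩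
  refine ⟨⟨by simp, x, by simp, y, by simp, hdel⟩, ?_⟩
  rintro T ⟨⟨huT, hvT⟩, b, hbT, c, hcT, hbc⟩ hT
  have hfar : ∀ a ∈ T, ∀ a' ∈ T, (G.deleteEdges {s(u, v)}).Adj a a' → a = x ∨ a = y := by
    intro a ha a' ha' haa'
    by_contra haxy
    have hauv : a = u ∨ a = v := by
      have := hT ha
      simp only [Finset.mem_insert, Finset.mem_singleton] at this
      tauto
    have ha'N := mem_neighborSet_diff_of_deleteEdges_adj haa' hauv
    have ha'uv := ne_of_mem_neighborSet_diff ha'N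
    replace ha'N := Set.union_subset_union Set.sdiff_subset Set.sdiff_subset ha'N
    have := hT ha'
    simp only [Finset.mem_insert, Finset.mem_singleton] at this
    rcases this with rfl | rfl | rfl | rfl
    exacts [ha'uv.1 rfl, ha'uv.2 rfl, hx ha'N, hy ha'N]
  have hxT : x ∈ T ∧ y ∈ T := by
    have := hfar b hbT c hcT hbc
    have := hfar c hcT b hbT hbc.symm
    have := hbc.ne
    grind
  simp [Finset.insert_subset_iff, huT, hvT, hxT]

theorem minimal_containsTwoEdges_iff (huv : G.Adj u v) {S : Finset V} :
    Minimal (G.ContainsTwoEdges u v) S ↔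
      (∃ w ∈ G.neighborSet u \ {v} ∪ G.neighborSet v \ {u}, S = {u, v, w}) ∨
      ∃ x y, (delVerts G (G.neighborSet u ∪ G.neighborSet v)).Adj x y ∧ S = {u, v, x, y} := by
  refine ⟨fun hS => ?_, ?_⟩
  · obtain ⟨⟨hu, hv⟩, x, hx, y, hy, hxy⟩ := hS.prop
    by_cases hw : ∃ w ∈ S, w ∈ G.neighborSet u \ {v} ∪ G.neighborSet v \ {u}
    · obtain ⟨w, hwS, hw⟩ := hw
      exact Or.inl ⟨w, hw, hS.eq_of_ge (minimal_containsTwoEdges_insert_insert_singleton hw).prop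
        (by simp [Finset.insert_subset_iff, hu, hv, hwS])⟩
    · push Not at hw
      have hfar : ∀ a ∈ S, ∀ b ∈ S, (G.deleteEdges {s(u, v)}).Adj a b →
          a ∉ G.neighborSet u ∪ G.neighborSet v := by
        intro a ha b hb hab hauv
        by_cases ha' : a = u ∨ a = v
        · exact hw b hb (mem_neighborSet_diff_of_deleteEdges_adj hab ha')
        · push Not at ha'
          exact hw a ha (by simp_all)
      have hxy' : (delVerts G (G.neighborSet u ∪ G.neighborSet v)).Adj x y :=
        ⟨(deleteEdges_adj.1 hxy).1, hfar x hx y hy hxy, hfar y hy x hx hxy.symm⟩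
      exact Or.inr ⟨x, y, hxy', hS.eq_of_ge
        (minimal_containsTwoEdges_insert_insert_pair huv hxy').prop
        (by simp [Finset.insert_subset_iff, hu, hv, hx, hy])⟩
  · rintro (⟨w, hw, rfl⟩ | ⟨x, y, hxy, rfl⟩)
    · exact minimal_containsTwoEdges_insert_insert_singleton hw
    · exact minimal_containsTwoEdges_insert_insert_pair huv hxy

end SimpleGraph

theorem stmt1_general (k : Type*) [Field k] [DecidableEq V]
    (G : SimpleGraph V) (u v : V) (huv : G.Adj u v) :
    minGens (Ideal.span {(X u * X v : MvPolynomial V k)} ⊓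
        edgeIdeal k (G.deleteEdges {s(u, v)})) =
      ((fun w => (X u * X v * X w : MvPolynomial V k)) ''
          ((G.neighborSet u \ {v}) \ (G.neighborSet v \ {u}))) ∪
      ((fun w => (X u * X v * X w : MvPolynomial V k)) ''
          ((G.neighborSet v \ {u}) \ (G.neighborSet u \ {v}))) ∪
      ((fun w => (X u * X v * X w : MvPolynomial V k)) ''
          ((G.neighborSet u \ {v}) ∩ (G.neighborSet v \ {u}))) ∪
      {m | ∃ x y, (delVerts G (G.neighborSet u ∪ G.neighborSet v)).Adj x y ∧
          m = (X u * X v * (X x * X y) : MvPolynomial V k)} := by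
  rw [minGens_eq_image_prod_X (G.monomial_mem_inf_iff_containsTwoEdges huv.ne),
    ← Set.image_union, ← Set.image_union,
    ← Set.union_eq_sdiff_union_sdiff_union_inter]
  have prod_triple {w} (hw : w ∈ G.neighborSet u \ {v} ∪ G.neighborSet v \ {u}) :
      ∏ x ∈ {u, v, w}, (X x : MvPolynomial V k) = X u * X v * X w :=
    have hwuv := SimpleGraph.ne_of_mem_neighborSet_diff hw
    prod_X_insert_insert_singleton huv.ne hwuv.1.symm hwuv.2.symm
  have prod_quad {x y} (hxy : (delVerts G (G.neighborSet u ∪ G.neighborSet v)).Adj x y) :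
      ∏ z ∈ {u, v, x, y}, (X z : MvPolynomial V k) = X u * X v * (X x * X y) :=
    have hx := SimpleGraph.ne_of_delVerts_adj huv hxy
    have hy := SimpleGraph.ne_of_delVerts_adj huv hxy.symm
    prod_X_insert_insert_pair huv.ne hx.1.symm hy.1.symm hx.2.symm hy.2.symm hxy.ne
  ext m
  simp only [Set.mem_image, Set.mem_union, Set.mem_ofPred_eq,
    SimpleGraph.minimal_containsTwoEdges_iff huv]
  constructor
  · rintro ⟨S, ⟨w, hw, rfl⟩ | ⟨x, y, hxy, rfl⟩, rfl⟩
    exacts [Or.inl ⟨w, hw, (prod_triple hw).symm⟩, Or.inr ⟨x, y, hxy, prod_quad hxy⟩]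
  · rintro (⟨w, hw, rfl⟩ | ⟨x, y, hxy, rfl⟩)
    exacts [⟨_, Or.inl ⟨w, hw, rfl⟩, prod_triple hw⟩, ⟨_, Or.inr ⟨x, y, hxy, rfl⟩, prod_quad hxy⟩]

/-- with `e = uv ∈ E_G`, `J = (uv)`, `K = I(G \ e)`,
`A = N(u) \ {v}`, `B = N(v) \ {u}` and `H = G \ (N(u) ∪ N(v))`, the minimal
generating set of `J ∩ K` is
`{uvw : w ∈ A \ B} ∪ {uvw : w ∈ B \ A} ∪ {uvw : w ∈ A ∩ B} ∪ {uv·m : m ∈ G(I(H))}`. -/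
theorem stmt1 (k : Type*) [Field k] [Fintype V] [DecidableEq V]
    (G : SimpleGraph V) (u v : V) (huv : G.Adj u v) :
    minGens (Ideal.span {(X u * X v : MvPolynomial V k)} ⊓
        edgeIdeal k (G.deleteEdges {s(u, v)})) =
      ((fun w => (X u * X v * X w : MvPolynomial V k)) ''
          ((G.neighborSet u \ {v}) \ (G.neighborSet v \ {u}))) ∪
      ((fun w => (X u * X v * X w : MvPolynomial V k)) ''
          ((G.neighborSet v \ {u}) \ (G.neighborSet u \ {v}))) ∪
      ((fun w => (X u * X v * X w : MvPolynomial V k)) ''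
          ((G.neighborSet u \ {v}) ∩ (G.neighborSet v \ {u}))) ∪
      {m | ∃ x y, (delVerts G (G.neighborSet u ∪ G.neighborSet v)).Adj x y ∧
          m = (X u * X v * (X x * X y) : MvPolynomial V k)} :=
  stmt1_general k G u v huv
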